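/- Let R be a finite T₀ space and P, Q fiberwise spaces over R that are themselves finite T₀ spaces. If two fiberwise maps f, g : P → Q over R are fiberwise homotopic, then there exist m ≥ 0 and a continuous map H : P × J_m → Q over R with H(·,0) = f and H(·,m) = g. -/

import Mathlib

open Set

/-- The finite fence poset `0 < 1 > 2 < ⋯ m` on `m+1` points. -/
def J (m : ℕ) : Type := Fin (m + 1)

namespace J

/-- The underlying natural number of a point of the fence. -/
def val {m : ℕ} (i : J m) : ℕ := @Fin.val (m + 1) i

instance (m : ℕ) : PartialOrder (J m) where
  le i j := i.val = j.val ∨ (j.val % 2 = 1 ∧ (j.val = i.val + 1 ∨ i.val = j.val + 1))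
  le_refl i := Or.inl rfl
  le_trans a b c h₁ h₂ := by
    show a.val = c.val ∨ (c.val % 2 = 1 ∧ (c.val = a.val + 1 ∨ a.val = c.val + 1))
    rcases h₁ with h₁ | h₁ <;> rcases h₂ with h₂ | h₂ <;> omega
  le_antisymm a b h₁ h₂ := by
    have : a.val = b.val := by rcases h₁ with h₁ | h₁ <;> rcases h₂ with h₂ | h₂ <;> omega
    exact @Fin.val_injective (m + 1) a b this

instance (m : ℕ) : Finite (J m) := inferInstanceAs (Finite (Fin (m + 1)))

/-- The initial point `0` of the fence. -/
def zero {m : ℕ} : J m := (0 : Fin (m + 1))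

/-- The terminal point `m` of the fence. -/
def last {m : ℕ} : J m := Fin.last m

end J

/-- The Alexandrov topology on a preordered set: open sets are the lower sets (ideals). -/
def alexTop (α : Type*) [Preorder α] : TopologicalSpace α where
  IsOpen s := IsLowerSet s
  isOpen_univ := isLowerSet_univ
  isOpen_inter _ _ := IsLowerSet.inter
  isOpen_sUnion _ := isLowerSet_sUnion

instance (m : ℕ) : TopologicalSpace (J m) := alexTop (J m)

/-- `P × P` can be covered by `n` open sets, each admitting a continuous section of
`q_m : P^{J_m} → P × P`, `γ ↦ (γ(0), γ(m))`. -/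
def hasCCCover (P : Type*) [TopologicalSpace P] (m n : ℕ) : Prop :=
  ∃ U : Fin n → Set (P × P), (∀ i, IsOpen (U i)) ∧ (⋃ i, U i) = Set.univ ∧
    ∀ i, ∃ s : C(U i, C(J m, P)),
      ∀ x : U i, (s x) J.zero = (x : P × P).1 ∧ (s x) J.last = (x : P × P).2

/-- The combinatorial complexity at length `m`. -/
noncomputable def CCm (P : Type*) [TopologicalSpace P] (m : ℕ) : ℕ∞ :=
  sInf ((↑) '' {n : ℕ | hasCCCover P m n})

/-- The combinatorial complexity `CC(P) = min_m CC_m(P)`. -/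
noncomputable def CC (P : Type*) [TopologicalSpace P] : ℕ∞ := ⨅ m, CCm P m

/-- `X × X` can be covered by `n` open sets, each admitting a continuous section of the
path fibration `X^I → X × X`. -/
def hasTCCover (X : Type*) [TopologicalSpace X] (n : ℕ) : Prop :=
  ∃ U : Fin n → Set (X × X), (∀ i, IsOpen (U i)) ∧ (⋃ i, U i) = Set.univ ∧
    ∀ i, ∃ s : C(U i, C(unitInterval, X)),
      ∀ x : U i, (s x) 0 = (x : X × X).1 ∧ (s x) 1 = (x : X × X).2

/-- Farber's topological complexity. -/
noncomputable def topComplexity (X : Type*) [TopologicalSpace X] : ℕ∞ :=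
  sInf ((↑) '' {n : ℕ | hasTCCover X n})

/-- A subset is contractible in the ambient space when its inclusion is null-homotopic. -/
def ContractibleIn {X : Type*} [TopologicalSpace X] (A : Set X) : Prop :=
  ∃ x₀ : X, ContinuousMap.Homotopic ⟨Subtype.val, continuous_subtype_val⟩
    (ContinuousMap.const A x₀)

/-- The (unreduced) Lusternik–Schnirelmann category. -/
noncomputable def cat (X : Type*) [TopologicalSpace X] : ℕ∞ :=
  sInf ((↑) '' {n : ℕ | ∃ U : Fin n → Set X, (∀ i, IsOpen (U i)) ∧ (⋃ i, U i) = Set.univ ∧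
    ∀ i, ContractibleIn (U i)})

/-!
A homotopy `P × I → Q` over `R` is a path in the space `M` of fiberwise maps, which is a finite
space. In a finite (Alexandrov-discrete) space, a connected set lies in a single class of the
equivalence relation generated by specialization, and for continuous maps into a poset with the
Alexandrov topology specialization is the pointwise order. So `f` and `g` are joined by a zigzag
`f = s₀ ≤ s₁ ≥ s₂ ≤ ⋯ ≥ s₂ₖ = g` in `M`, i.e. by a monotone map `J (2k) → M`, and uncurrying it
gives a monotone, hence continuous, map `P × J (2k) → Q`.
-/

open Relation

lemma Topology.IsLowerSet.of_isOpen_iff {α : Type*} [TopologicalSpace α] [Preorder α]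
    (h : ∀ s : Set α, IsOpen s ↔ IsLowerSet s) : Topology.IsLowerSet α :=
  ⟨TopologicalSpace.ext <| funext fun s => propext (h s)⟩

instance J.instIsLowerSet (m : ℕ) : Topology.IsLowerSet (J m) := ⟨rfl⟩

section AlexandrovDiscrete

variable {X Y : Type*} [TopologicalSpace X] [TopologicalSpace Y] [AlexandrovDiscrete X]

lemma continuous_of_forall_specializes {f : X → Y} (hf : ∀ x y, x ⤳ y → f x ⤳ f y) :
    Continuous f :=
  continuous_def.2 fun _ hU => isOpen_iff_forall_specializes.2 fun x y hxy hy =>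
    (hf x y hxy).mem_open hU hy

lemma IsPreconnected.eqvGen_specializes {T : Set X} (hT : IsPreconnected T) {x y : X}
    (hx : x ∈ T) (hy : y ∈ T) : EqvGen (· ⤳ ·) x y := by
  let C : Set X := {z | EqvGen (· ⤳ ·) x z}
  have hC : IsClopen C := by
    refine ⟨⟨isOpen_iff_forall_specializes.2 fun z w hzw hw hz => hw ?_⟩,
      isOpen_iff_forall_specializes.2 fun z w hzw hw => ?_⟩
    · exact hz.trans _ _ _ (EqvGen.rel _ _ hzw)
    · exact hw.trans _ _ _ ((EqvGen.rel _ _ hzw).symm)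
  exact hT.subset_isClopen hC ⟨x, hx, EqvGen.refl x⟩ hy

end AlexandrovDiscrete

section LowerSetTopology

variable {X T Y : Type*} [TopologicalSpace X] [TopologicalSpace T] [TopologicalSpace Y]
  [PartialOrder Y] [Topology.IsLowerSet Y]

lemma ContinuousMap.le_of_specializes {f g : C(X, Y)} (h : f ⤳ g) : f ≤ g := fun x =>
  Topology.IsLowerSet.specializes_iff_le.1 (h.map (continuous_eval_const x))

variable [Preorder X] [Preorder T] [Topology.IsLowerSet X] [Topology.IsLowerSet T]

lemma ContinuousMap.continuous_uncurry_of_monotone (γ : T →o C(X, Y)) :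
    Continuous fun z : X × T => γ z.2 z.1 := by
  refine continuous_of_forall_specializes fun ⟨x, t⟩ ⟨x', t'⟩ h => ?_
  simp only [specializes_prod, Topology.IsLowerSet.specializes_iff_le] at h ⊢
  exact ((Topology.IsLowerSet.monotone_iff_continuous.2 (γ t).continuous) h.1).trans
    (γ.mono h.2 x')

end LowerSetTopology

section Fence

variable {α : Type*} [Preorder α]

lemma exists_zigzag_of_reflTransGen {x y : α} (h : ReflTransGen (SymmGen (· ≤ ·)) x y) :
    ∃ (k : ℕ) (s : ℕ → α), s 0 = x ∧ s (2 * k) = y ∧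
      ∀ i < k, s (2 * i) ≤ s (2 * i + 1) ∧ s (2 * i + 2) ≤ s (2 * i + 1) := by
  induction h with
  | refl => exact ⟨0, fun _ => x, rfl, rfl, by simp⟩
  | @tail b c _ hbc ih =>
    obtain ⟨k, s, hs0, hsk, hs⟩ := ih
    obtain ⟨u, hbu, hcu⟩ : ∃ u, b ≤ u ∧ c ≤ u :=
      hbc.elim (fun h => ⟨c, h, le_rfl⟩) (fun h => ⟨b, le_rfl, h⟩)
    refine ⟨k + 1, fun j => if j ≤ 2 * k then s j else if j = 2 * k + 1 then u else c,
      by simpa using hs0, ?_, fun i hi => ?_⟩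
    · simp [show ¬2 * (k + 1) ≤ 2 * k by omega, show 2 * (k + 1) ≠ 2 * k + 1 by omega]
    rcases Nat.lt_succ_iff_lt_or_eq.1 hi with hi | rfl
    · simpa [show 2 * i + 2 ≤ 2 * k by omega, show 2 * i + 1 ≤ 2 * k by omega,
        show 2 * i ≤ 2 * k by omega] using hs i hi
    · simp [hsk, hbu, hcu]

lemma J.monotone_of_zigzag {k : ℕ} {s : ℕ → α}
    (hs : ∀ i < k, s (2 * i) ≤ s (2 * i + 1) ∧ s (2 * i + 2) ≤ s (2 * i + 1)) :
    Monotone fun t : J (2 * k) => s t.val := by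
  intro t t' htt'
  have ht : t.val < 2 * k + 1 := (show Fin (2 * k + 1) from t).isLt
  have ht' : t'.val < 2 * k + 1 := (show Fin (2 * k + 1) from t').isLt
  rcases htt' with h | ⟨hodd, h | h⟩
  · exact (congrArg s h).le
  · obtain ⟨i, hi⟩ : ∃ i, t'.val = 2 * i + 1 := ⟨t'.val / 2, by omega⟩
    simpa only [hi, show t.val = 2 * i by omega] using (hs i (by omega)).1
  · obtain ⟨i, hi⟩ : ∃ i, t'.val = 2 * i + 1 := ⟨t'.val / 2, by omega⟩
    simpa only [hi, show t.val = 2 * i + 2 by omega] using (hs i (by omega)).2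

lemma exists_fence_of_eqvGen {x y : α} (h : EqvGen (· ≤ ·) x y) :
    ∃ (m : ℕ) (γ : J m →o α), γ J.zero = x ∧ γ J.last = y := by
  rw [← EqvGen.reflTransGen_symmGen] at h
  obtain ⟨k, s, hs0, hsk, hs⟩ := exists_zigzag_of_reflTransGen h
  exact ⟨2 * k, ⟨fun t => s t.val, J.monotone_of_zigzag hs⟩, hs0, hsk⟩

end Fence

theorem fiberwise_homotopic_fence_general
    (R P Q : Type) [PartialOrder P] [PartialOrder Q]
    [Finite P] [Finite Q]
    [TopologicalSpace R] [TopologicalSpace P] [TopologicalSpace Q]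
    (hP : ∀ s : Set P, IsOpen s ↔ IsLowerSet s)
    (hQ : ∀ s : Set Q, IsOpen s ↔ IsLowerSet s)
    (πP : C(P, R)) (πQ : C(Q, R)) (f g : C(P, Q))
    (hf : ∀ p : P, πQ (f p) = πP p) (hg : ∀ p : P, πQ (g p) = πP p)
    (h : ∃ H : C(P × unitInterval, Q),
      (∀ p : P, H (p, 0) = f p) ∧ (∀ p : P, H (p, 1) = g p) ∧
      ∀ (p : P) (t : unitInterval), πQ (H (p, t)) = πP p) :
    ∃ (m : ℕ) (H : C(P × J m, Q)),
      (∀ p : P, H (p, J.zero) = f p) ∧ (∀ p : P, H (p, J.last) = g p) ∧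
      ∀ (p : P) (t : J m), πQ (H (p, t)) = πP p := by
  obtain ⟨H, hH0, hH1, hHfib⟩ := h
  have := Topology.IsLowerSet.of_isOpen_iff hP
  have := Topology.IsLowerSet.of_isOpen_iff hQ
  have : Finite C(P, Q) := Finite.of_injective _ DFunLike.coe_injective
  let M := {φ : C(P, Q) // ∀ p, πQ (φ p) = πP p}
  let path : C(unitInterval, M) :=
    ⟨fun t => ⟨(H.comp ⟨Prod.swap, continuous_swap⟩).curry t, (hHfib · t)⟩,
      (map_continuous _).subtype_mk _⟩
  have hpath0 : path 0 = ⟨f, hf⟩ := Subtype.ext (ContinuousMap.ext hH0)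
  have hpath1 : path 1 = ⟨g, hg⟩ := Subtype.ext (ContinuousMap.ext hH1)
  have hfg : EqvGen (· ≤ ·) (⟨f, hf⟩ : M) ⟨g, hg⟩ :=
    EqvGen.mono (fun _ _ hab => ContinuousMap.le_of_specializes (hab.map continuous_subtype_val))
      _ _ ((isPreconnected_range path.continuous).eqvGen_specializes ⟨0, hpath0⟩ ⟨1, hpath1⟩)
  obtain ⟨m, γ, hγ0, hγm⟩ := exists_fence_of_eqvGen hfg
  refine ⟨m, ⟨_, ContinuousMap.continuous_uncurry_of_monotone ((OrderHom.Subtype.val _).comp γ)⟩,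
    fun p => ?_, fun p => ?_, fun p t => (γ t).2 p⟩
  · simp [hγ0]
  · simp [hγm]

/-- If two fiberwise maps `f g : P → Q` over `R` between finite spaces are
fiberwise homotopic, then they are connected by a fiberwise combinatorial homotopy
`H : P × J_m → Q` over `R`. -/
theorem fiberwise_homotopic_fence
    (R P Q : Type) [PartialOrder R] [PartialOrder P] [PartialOrder Q]
    [Finite R] [Finite P] [Finite Q]
    [TopologicalSpace R] [TopologicalSpace P] [TopologicalSpace Q]
    (hR : ∀ s : Set R, IsOpen s ↔ IsLowerSet s)
    (hP : ∀ s : Set P, IsOpen s ↔ IsLowerSet s)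
    (hQ : ∀ s : Set Q, IsOpen s ↔ IsLowerSet s)
    (πP : C(P, R)) (πQ : C(Q, R)) (f g : C(P, Q))
    (hf : ∀ p : P, πQ (f p) = πP p) (hg : ∀ p : P, πQ (g p) = πP p)
    (h : ∃ H : C(P × unitInterval, Q),
      (∀ p : P, H (p, 0) = f p) ∧ (∀ p : P, H (p, 1) = g p) ∧
      ∀ (p : P) (t : unitInterval), πQ (H (p, t)) = πP p) :
    ∃ (m : ℕ) (H : C(P × J m, Q)),
      (∀ p : P, H (p, J.zero) = f p) ∧ (∀ p : P, H (p, J.last) = g p) ∧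
      ∀ (p : P) (t : J m), πQ (H (p, t)) = πP p :=
  fiberwise_homotopic_fence_general R P Q hP hQ πP πQ f g hf hg h
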